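/- arXiv:2204.04526 — 5 statements merged into one kernel-verified Lean document; each statement's English description precedes it below -/
import Mathlib

section
/- For natural numbers ℓ, m, n with m ≤ n, the identity (t)_{ℓ+m} · (t)_{ℓ+n} = (t)_ℓ · ∑_{s=0}^{m} C(n,s)·C(m,s)·s! · (t)_{ℓ+n+m−s} holds in the polynomial ring ℤ[t], where (t)_k denotes the falling factorial t(t−1)⋯(t−k+1) and C(a,b) denotes the binomial coefficient. -/
open Polynomial Finset

private lemma evalsplit (ℓ k : ℕ) (x : ℤ) :
    (descPochhammer ℤ (ℓ + k)).eval x =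
      (descPochhammer ℤ ℓ).eval x * (descPochhammer ℤ k).eval (x - ℓ) := by
  rw [← descPochhammer_mul, eval_mul, eval_comp, eval_sub, eval_X, eval_natCast]

private lemma coeff_step (n m s : ℕ) (hs : s ≤ m) (hmn : m < n) :
    n.choose (s+1) * m.choose (s+1) * (s+1).factorial
      + n.choose s * m.choose s * s.factorial * (n - s) =
    n.choose (s+1) * (m+1).choose (s+1) * (s+1).factorial := by
  have h1 : n.choose (s+1) * (s+1) = n.choose s * (n - s) :=
    Nat.choose_succ_right_eq n s
  have h2 : (m+1).choose (s+1) = m.choose s + m.choose (s+1) :=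
    Nat.choose_succ_succ m s
  have h3 : (s+1).factorial = (s+1) * s.factorial := Nat.factorial_succ s
  have hsn : s ≤ n := le_trans hs (le_of_lt hmn)
  have h1' : (n.choose (s+1) : ℤ) * (s+1) = n.choose s * ((n:ℤ) - s) := by
    zify [hsn] at h1; linarith [h1]
  zify [hsn]
  rw [h2, h3]
  push_cast
  linear_combination (-((m.choose s : ℤ) * s.factorial)) * h1'

private lemma key (n : ℕ) : ∀ m, m ≤ n → ∀ y : ℤ,
    (descPochhammer ℤ m).eval y * (descPochhammer ℤ n).eval y =
      ∑ s ∈ Finset.range (m + 1),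
        ((n.choose s * m.choose s * s.factorial : ℕ) : ℤ) *
          (descPochhammer ℤ (n + m - s)).eval y := by
  intro m
  induction m with
  | zero => intro _ y; simp
  | succ m ih =>
    intro hm y
    have hmn : m ≤ n := le_trans (Nat.le_succ m) hm
    have hstep : (descPochhammer ℤ (m+1)).eval y = (descPochhammer ℤ m).eval y * (y - m) :=
      descPochhammer_succ_eval m y
    have expand : (descPochhammer ℤ m).eval y * (descPochhammer ℤ n).eval y * (y - m) =
        ∑ s ∈ Finset.range (m + 1),
          (((n.choose s * m.choose s * s.factorial : ℕ) : ℤ) *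
              (descPochhammer ℤ (n + m + 1 - s)).eval y
            + ((n.choose s * m.choose s * s.factorial * (n - s) : ℕ) : ℤ) *
              (descPochhammer ℤ (n + m - s)).eval y) := by
      rw [ih hmn y, Finset.sum_mul]
      refine Finset.sum_congr rfl fun s hs => ?_
      have hsm : s ≤ m := Nat.lt_succ_iff.mp (Finset.mem_range.mp hs)
      have h1 : n + m + 1 - s = (n + m - s) + 1 := by omega
      rw [h1, descPochhammer_succ_eval]
      have hc : ((n + m - s : ℕ) : ℤ) = (n : ℤ) + m - s := by
        push_cast [Nat.cast_sub (by omega : s ≤ n + m)]; ring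
      have hc2 : ((n - s : ℕ) : ℤ) = (n : ℤ) - s := by
        push_cast [Nat.cast_sub (by omega : s ≤ n)]; ring
      rw [hc]
      push_cast [hc2]
      ring
    -- rewrite LHS
    rw [hstep, mul_right_comm, expand, Finset.sum_add_distrib]
    -- now handle the two sums
    have hA : (∑ s ∈ Finset.range (m + 1),
          ((n.choose s * m.choose s * s.factorial : ℕ) : ℤ) *
            (descPochhammer ℤ (n + m + 1 - s)).eval y)
        = ∑ s ∈ Finset.range (m + 2),
          ((n.choose s * m.choose s * s.factorial : ℕ) : ℤ) *
            (descPochhammer ℤ (n + m + 1 - s)).eval y := by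
      rw [Finset.sum_range_succ (n := m + 1)]
      simp [Nat.choose_succ_self]
    rw [hA, Finset.sum_range_succ' _ (m + 1)]
    rw [show (∑ s ∈ Finset.range (m + 2),
          ((n.choose s * (m+1).choose s * s.factorial : ℕ) : ℤ) *
            (descPochhammer ℤ (n + (m+1) - s)).eval y)
        = (∑ s ∈ Finset.range (m + 1),
            ((n.choose (s+1) * (m+1).choose (s+1) * (s+1).factorial : ℕ) : ℤ) *
              (descPochhammer ℤ (n + (m+1) - (s+1))).eval y)
          + ((n.choose 0 * (m+1).choose 0 * Nat.factorial 0 : ℕ) : ℤ) *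
              (descPochhammer ℤ (n + (m+1) - 0)).eval y from
      Finset.sum_range_succ' _ (m + 1)]
    have hB : ∀ s ∈ Finset.range (m + 1),
        ((n.choose (s+1) * m.choose (s+1) * (s+1).factorial : ℕ) : ℤ) *
            (descPochhammer ℤ (n + m + 1 - (s+1))).eval y
          + ((n.choose s * m.choose s * s.factorial * (n - s) : ℕ) : ℤ) *
            (descPochhammer ℤ (n + m - s)).eval y
        = ((n.choose (s+1) * (m+1).choose (s+1) * (s+1).factorial : ℕ) : ℤ) *
            (descPochhammer ℤ (n + (m+1) - (s+1))).eval y := by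
      intro s hs
      have hsm : s ≤ m := Nat.lt_succ_iff.mp (Finset.mem_range.mp hs)
      have h1 : n + m + 1 - (s+1) = n + m - s := by omega
      have h2 : n + (m+1) - (s+1) = n + m - s := by omega
      rw [h1, h2, ← add_mul, ← Nat.cast_add, coeff_step n m s hsm (by omega)]
    rw [add_right_comm, ← Finset.sum_add_distrib, Finset.sum_congr rfl hB]
    have h0 : n + m + 1 - 0 = n + (m+1) - 0 := by omega
    simp [h0]

/-- For natural numbers ℓ, m, n with m ≤ n, the identity
(t)_{ℓ+m} · (t)_{ℓ+n} = (t)_ℓ · ∑_{s=0}^{m} C(n,s)·C(m,s)·s! · (t)_{ℓ+n+m−s}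
holds in ℤ[t], where (t)_k is the falling factorial polynomial. -/
theorem falling_factorial_product_identity (ℓ m n : ℕ) (h : m ≤ n) :
    descPochhammer ℤ (ℓ + m) * descPochhammer ℤ (ℓ + n) =
      descPochhammer ℤ ℓ *
        ∑ s ∈ Finset.range (m + 1),
          Polynomial.C ((n.choose s * m.choose s * s.factorial : ℕ) : ℤ) *
            descPochhammer ℤ (ℓ + n + m - s) := by
  apply Polynomial.funext
  intro x
  simp only [eval_mul, eval_finset_sum, eval_C]
  have hsum : (∑ s ∈ Finset.range (m + 1),
        ((n.choose s * m.choose s * s.factorial : ℕ) : ℤ) *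
          (descPochhammer ℤ (ℓ + n + m - s)).eval x)
      = (descPochhammer ℤ ℓ).eval x * ∑ s ∈ Finset.range (m + 1),
          ((n.choose s * m.choose s * s.factorial : ℕ) : ℤ) *
            (descPochhammer ℤ (n + m - s)).eval (x - ℓ) := by
    rw [Finset.mul_sum]
    refine Finset.sum_congr rfl fun s hs => ?_
    have hsm : s ≤ m := Nat.lt_succ_iff.mp (Finset.mem_range.mp hs)
    have h1 : ℓ + n + m - s = ℓ + (n + m - s) := by omega
    rw [h1, evalsplit]
    ring
  rw [hsum, evalsplit ℓ m, evalsplit ℓ n]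
  have := key n m h (x - ℓ)
  linear_combination ((descPochhammer ℤ ℓ).eval x)^2 * this
end

section
/- For all natural numbers n, m and every integer t, the identity C(t,n)·C(t,m) = ∑_{k=max(n,m)}^{n+m} C(k,n)·C(n, n+m−k)·C(t,k) holds, where C denotes the binomial coefficient (extended to integer top argument by C(t,k) = t(t−1)⋯(t−k+1)/k!). -/
/-!
Write `t = n + (t - n)` and expand `C(t, m)` by Chu–Vandermonde as
`∑ j C(n, m - j) C(t - n, j)`. Each product `C(t, n) C(t - n, j)` equals
`C(n + j, n) C(t, n + j)` (choose a set of size `n + j`, then a subset of size `n`), so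
`C(t, n) C(t, m) = ∑ j C(n + j, n) C(n, m - j) C(t, n + j)`. Putting `k = n + j`, the terms with
`k < m` vanish because `C(n, n + m - k) = 0` there.
-/

/-- The generalized binomial coefficient `C(t, k)` for an integer `t` and a natural
number `k`: the falling factorial `t(t−1)⋯(t−k+1)` divided by `k!` (an exact division). -/
def intChoose (t : ℤ) (k : ℕ) : ℤ :=
  (∏ i ∈ Finset.range k, (t - (i : ℤ))) / (k.factorial : ℤ)

open Finset

namespace Ring

variable {R : Type*} [Ring R] [BinomialRing R]

theorem choose_mul_choose_eq_sum_range (r : R) (n m : ℕ) :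
    choose r n * choose r m =
      ∑ j ∈ range (m + 1), (((n + j).choose n * n.choose (m - j) : ℕ) : R) * choose r (n + j) := by
  have vandermonde :
      choose r m = ∑ j ∈ range (m + 1), (n.choose (m - j) : R) * choose (r - n) j := by
    conv_lhs => rw [← add_sub_cancel (n : R) r]
    rw [add_choose_eq m (Nat.cast_commute n _), ← Nat.sum_antidiagonal_swap]
    simp only [Prod.fst_swap, Prod.snd_swap, choose_natCast]
    exact Nat.sum_antidiagonal_eq_sum_range_succ (fun i j => (n.choose j : R) * choose (r - n) i) m
  rw [vandermonde, mul_sum]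
  refine sum_congr rfl fun j _ => ?_
  have choose_mul_choose_sub :
      (n + j).choose n • choose r (n + j) = choose r n * choose (r - n) j := by
    rw [choose_smul_choose r (Nat.le_add_right n j), Nat.add_sub_cancel_left]
  calc choose r n * (n.choose (m - j) * choose (r - n) j)
      _ = n.choose (m - j) * (choose r n * choose (r - n) j) :=
        (Nat.cast_commute _ _).symm.left_comm _
      _ = n.choose (m - j) * ((n + j).choose n • choose r (n + j)) := by rw [choose_mul_choose_sub]
      _ = _ := by rw [nsmul_eq_mul, ← mul_assoc, ← Nat.cast_mul, Nat.mul_comm (n.choose _)]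

theorem choose_mul_choose (r : R) (n m : ℕ) :
    choose r n * choose r m =
      ∑ k ∈ Icc (max n m) (n + m), ((k.choose n * n.choose (n + m - k) : ℕ) : R) * choose r k := by
  have vanishing : ∀ k ∈ Icc n (n + m), k ∉ Icc (max n m) (n + m) →
      ((k.choose n * n.choose (n + m - k) : ℕ) : R) * choose r k = 0 := by
    intro k hk hk'
    simp only [mem_Icc] at hk hk'
    rw [Nat.choose_eq_zero_of_lt (n := n) (by omega), mul_zero, Nat.cast_zero, zero_mul]
  rw [sum_subset (Icc_subset_Icc_left (le_max_left n m)) vanishing,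
    ← Ico_add_one_right_eq_Icc, sum_Ico_eq_sum_range, choose_mul_choose_eq_sum_range,
    show n + m + 1 - n = m + 1 by omega]
  simp only [Nat.add_sub_add_left]

end Ring

theorem intChoose_eq_choose (t : ℤ) (k : ℕ) : intChoose t k = Ring.choose t k := by
  rw [intChoose, ← descPochhammer_eval_eq_prod_range, Polynomial.eval_eq_smeval,
    Ring.descPochhammer_eq_factorial_smul_choose, nsmul_eq_mul]
  exact Int.mul_ediv_cancel_left _ (mod_cast k.factorial_ne_zero)

/-- For all natural numbers n, m and every integer t,
C(t,n)·C(t,m) = ∑_{k=max(n,m)}^{n+m} C(k,n)·C(n, n+m−k)·C(t,k). -/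
theorem intChoose_mul_intChoose (n m : ℕ) (t : ℤ) :
    intChoose t n * intChoose t m =
      ∑ k ∈ Finset.Icc (max n m) (n + m),
        ((k.choose n * n.choose (n + m - k) : ℕ) : ℤ) * intChoose t k := by
  simp only [intChoose_eq_choose]
  exact Ring.choose_mul_choose t n m
end

section
/- Let R be a binomial ring, i.e., a commutative ring with no ℤ-torsion such that for every x ∈ R and every natural number n, the element x(x−1)⋯(x−n+1)/n! of R ⊗ ℚ lies in R. Then for every prime p and every x ∈ R, the element x^p − x lies in the ideal pR. -/
/-! The falling factorial `x(x-1)⋯(x-p+1)` is `p!` times an element of `R`, hence lies in `pR`;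
and it is congruent to `x^p - x` modulo `p`, because over `𝔽_p` the polynomial `X^p - X` is the
product of `X - a` over all `a ∈ 𝔽_p`. -/

open Polynomial Finset

theorem FiniteField.prod_univ_X_sub_C (K : Type*) [Field K] [Fintype K] :
    ∏ c : K, (X - C c) = (X ^ Fintype.card K - X : K[X]) := by
  have hmonic : (X ^ Fintype.card K - X : K[X]).Monic :=
    monic_X_pow_sub (by rw [degree_X]; exact_mod_cast Fintype.one_lt_card)
  have hcard : Multiset.card (X ^ Fintype.card K - X : K[X]).roots =
      (X ^ Fintype.card K - X : K[X]).natDegree := by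
    rw [roots_X_pow_card_sub_X, X_pow_card_sub_X_natDegree_eq K Fintype.one_lt_card]
    rfl
  simpa [roots_X_pow_card_sub_X] using prod_multiset_X_sub_C_of_monic_of_roots_card_eq hmonic hcard

theorem ZMod.prod_range_X_sub_natCast (p : ℕ) [Fact p.Prime] :
    ∏ i ∈ range p, (X - (i : (ZMod p)[X])) = X ^ p - X := by
  calc ∏ i ∈ range p, (X - (i : (ZMod p)[X])) = ∏ c : ZMod p, (X - C c) :=
        prod_nbij' (fun i => (i : ZMod p)) ZMod.val (by simp) (by simp [ZMod.val_lt])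
          (fun i hi => ZMod.val_cast_of_lt (mem_range.mp hi)) (fun a _ => ZMod.natCast_zmod_val a)
          (fun i _ => by simp)
    _ = X ^ p - X := by rw [FiniteField.prod_univ_X_sub_C, ZMod.card]

theorem Polynomial.prod_range_X_sub_natCast_sub_mem_span (p : ℕ) [Fact p.Prime] :
    ∏ i ∈ range p, (X - (i : ℤ[X])) - (X ^ p - X) ∈ Ideal.span {(p : ℤ[X])} := by
  have hker : RingHom.ker (mapRingHom (Int.castRingHom (ZMod p))) = Ideal.span {(p : ℤ[X])} := by
    rw [ker_mapRingHom, ZMod.ker_intCastRingHom, Ideal.map_span, Set.image_singleton, map_natCast]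
  rw [← hker, RingHom.mem_ker, map_sub, map_prod]
  simp [ZMod.prod_range_X_sub_natCast]

theorem prod_range_sub_natCast_sub_mem_span {A : Type*} [CommRing A] (p : ℕ) [Fact p.Prime]
    (a : A) : ∏ i ∈ range p, (a - i) - (a ^ p - a) ∈ Ideal.span {(p : A)} := by
  have := Ideal.mem_map_of_mem (aeval a) (prod_range_X_sub_natCast_sub_mem_span p)
  simpa [Ideal.map_span] using this

theorem binomial_ring_frobenius_congruence_general {R : Type*} [CommRing R]
    (hbin : ∀ (x : R) (n : ℕ), ∃ y : R,
      (n.factorial : R) * y = ∏ i ∈ Finset.range n, (x - (i : R)))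
    (p : ℕ) (hp : p.Prime) (x : R) :
    x ^ p - x ∈ Ideal.span {(p : R)} := by
  have := Fact.mk hp
  obtain ⟨y, hy⟩ := hbin x p
  have hprod : ∏ i ∈ range p, (x - (i : R)) ∈ Ideal.span {(p : R)} := by
    rw [← hy, ← Nat.mul_factorial_pred hp.ne_zero, Nat.cast_mul, mul_assoc]
    exact Ideal.mul_mem_right _ _ (Ideal.mem_span_singleton_self _)
  simpa using Ideal.sub_mem _ hprod (prod_range_sub_natCast_sub_mem_span p x)

/-- Let R be a binomial ring, i.e. a commutative ring with no ℤ-torsion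
such that for every x ∈ R and every natural number n, the element
x(x−1)⋯(x−n+1)/n! of R ⊗ ℚ lies in R (equivalently, the falling factorial
x(x−1)⋯(x−n+1) is divisible by n! in R).  Then for every prime p and every x ∈ R,
the element x^p − x lies in the ideal pR. -/
theorem binomial_ring_frobenius_congruence {R : Type*} [CommRing R]
    (htf : ∀ c : ℤ, c ≠ 0 → ∀ x : R, c • x = 0 → x = 0)
    (hbin : ∀ (x : R) (n : ℕ), ∃ y : R,
      (n.factorial : R) * y = ∏ i ∈ Finset.range n, (x - (i : R)))
    (p : ℕ) (hp : p.Prime) (x : R) :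
    x ^ p - x ∈ Ideal.span {(p : R)} :=
  binomial_ring_frobenius_congruence_general hbin p hp x
end

section
/- Let R = ℤ[x]/(2x² + x). Then the localization R[x⁻¹] of R at the element x is isomorphic as a ring to ℤ[1/2], via the map sending x to −1/2. -/
/-!
In `R[x⁻¹]` the relation `x (2x + 1) = 0` cancels to `2x = -1`, so `2` becomes a unit with
inverse `-x` and `R[x⁻¹]` receives a map from `ℤ[1/2]`. Conversely `-1/2 ∈ ℤ[1/2]` is a unit
root of `X (2X + 1)`, giving a map `R[x⁻¹] → ℤ[1/2]` with `x ↦ -1/2`. Both composites are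
identities, since maps out of `ℤ[1/2]` are unique and maps out of `R[x⁻¹]` are determined by
the image of `x`.
-/

/-- The ring R = ℤ[x]/(2x² + x). -/
abbrev boronRing : Type :=
  Polynomial ℤ ⧸ Ideal.span {2 * Polynomial.X ^ 2 + (Polynomial.X : Polynomial ℤ)}

/-- The class x of the variable X in R = ℤ[x]/(2x² + x). -/
noncomputable abbrev boronX : boronRing :=
  Ideal.Quotient.mk (Ideal.span {2 * Polynomial.X ^ 2 + (Polynomial.X : Polynomial ℤ)})
    Polynomial.X

open Polynomial

section CommRing

variable {A : Type*} [CommRing A] {c x : A}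

theorem mul_eq_neg_one_of_mul_mul_add_one_eq_zero (hx : IsUnit x) (h : x * (c * x + 1) = 0) :
    c * x = -1 :=
  eq_neg_of_add_eq_zero_left (hx.mul_right_eq_zero.mp h)

theorem isUnit_of_mul_eq_neg_one (h : c * x = -1) : IsUnit c :=
  .of_mul_eq_one (-x) (by rw [mul_neg, h, neg_neg])

end CommRing

noncomputable def negHalf : Localization.Away (2 : ℤ) :=
  Localization.mk (-1) ⟨2, Submonoid.mem_powers 2⟩

theorem two_mul_negHalf : 2 * negHalf = -1 := by
  rw [negHalf, Localization.mk_eq_mk']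
  simpa using IsLocalization.mk'_spec' (Localization.Away (2 : ℤ)) (-1 : ℤ)
    ⟨2, Submonoid.mem_powers 2⟩

namespace boronRing

theorem boronX_mul_two_mul_add_one : boronX * (2 * boronX + 1) = 0 := by
  have h : (X * (2 * X + 1) : ℤ[X]) = 2 * X ^ 2 + X := by ring
  calc boronX * (2 * boronX + 1)
      = Ideal.Quotient.mk _ (X * (2 * X + 1) : ℤ[X]) := by
        rw [map_mul, map_add, map_mul, map_ofNat, map_one]
    _ = 0 := by rw [h]; exact Ideal.Quotient.eq_zero_iff_mem.mpr (Ideal.mem_span_singleton_self _)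

theorem ringHom_ext {A : Type*} [Ring A] {f g : boronRing →+* A} (h : f boronX = g boronX) :
    f = g :=
  Ideal.Quotient.ringHom_ext <| Polynomial.ringHom_ext' (Subsingleton.elim (α := ℤ →+* A) _ _) h

noncomputable def lift {A : Type*} [CommRing A] (a : A) (ha : a * (2 * a + 1) = 0) :
    boronRing →+* A :=
  AdjoinRoot.lift (Int.castRingHom A) a (by
    simp only [eval₂_add, eval₂_mul, eval₂_ofNat, eval₂_X_pow, eval₂_X]
    linear_combination ha)

@[simp]
theorem lift_boronX {A : Type*} [CommRing A] (a : A) (ha : a * (2 * a + 1) = 0) :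
    lift a ha boronX = a :=
  AdjoinRoot.lift_root _

theorem two_mul_algebraMap_boronX :
    (2 : Localization.Away boronX) * algebraMap boronRing _ boronX = -1 := by
  refine mul_eq_neg_one_of_mul_mul_add_one_eq_zero
    (IsLocalization.Away.algebraMap_isUnit boronX) ?_
  have := congrArg (algebraMap boronRing (Localization.Away boronX)) boronX_mul_two_mul_add_one
  rwa [map_mul, map_add, map_mul, map_ofNat, map_one, map_zero] at this

noncomputable def toDyadic : Localization.Away boronX →+* Localization.Away (2 : ℤ) :=
  IsLocalization.Away.lift boronX
    (g := lift negHalf (by linear_combination negHalf * two_mul_negHalf))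
    (by rw [lift_boronX]; exact isUnit_of_mul_eq_neg_one ((mul_comm _ _).trans two_mul_negHalf))

theorem toDyadic_algebraMap_boronX : toDyadic (algebraMap boronRing _ boronX) = negHalf := by
  rw [toDyadic, IsLocalization.Away.lift_eq, lift_boronX]

noncomputable def ofDyadic : Localization.Away (2 : ℤ) →+* Localization.Away boronX :=
  IsLocalization.Away.lift 2 (g := Int.castRingHom _)
    (by simpa using isUnit_of_mul_eq_neg_one two_mul_algebraMap_boronX)

theorem ofDyadic_negHalf : ofDyadic negHalf = algebraMap boronRing _ boronX := by
  have h := congrArg ofDyadic two_mul_negHalf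
  rw [map_mul, map_neg, map_one, map_ofNat, ← two_mul_algebraMap_boronX] at h
  exact (isUnit_of_mul_eq_neg_one two_mul_algebraMap_boronX).mul_left_cancel h

theorem toDyadic_comp_ofDyadic : toDyadic.comp ofDyadic = RingHom.id _ :=
  IsLocalization.ringHom_ext (Submonoid.powers (2 : ℤ)) (Subsingleton.elim _ _)

theorem ofDyadic_comp_toDyadic : ofDyadic.comp toDyadic = RingHom.id _ :=
  IsLocalization.ringHom_ext (Submonoid.powers boronX) <| ringHom_ext <| by
    simp [toDyadic_algebraMap_boronX, ofDyadic_negHalf]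

end boronRing

/-- Let R = ℤ[x]/(2x² + x).  The localization R[x⁻¹] of R at x is isomorphic
as a ring to ℤ[1/2] (the localization of ℤ away from 2), via the map sending x to −1/2. -/
theorem boron_theta_localization :
    ∃ e : Localization.Away boronX ≃+* Localization.Away (2 : ℤ),
      e (algebraMap boronRing (Localization.Away boronX) boronX) =
        Localization.mk (-1) ⟨2, Submonoid.mem_powers 2⟩ :=
  ⟨.ofRingHom boronRing.toDyadic boronRing.ofDyadic boronRing.toDyadic_comp_ofDyadic
    boronRing.ofDyadic_comp_toDyadic, boronRing.toDyadic_algebraMap_boronX⟩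
end

section
/- For natural numbers a, n, m, the identity C(C(a,m), n) = ∑_{r=0}^{nm} c(n,m,r) · C(a,r) holds, where c(n,m,r) is the number of n-element sets {S₁,…,Sₙ} of pairwise distinct m-element subsets of {1,…,r} whose union S₁ ∪ ⋯ ∪ Sₙ equals {1,…,r}, and C denotes the binomial coefficient. -/
/-!
Both sides count the `n`-element sets of `m`-element subsets of `{0,…,a-1}`: grouping such a
family by its union `U` gives `coverCount n m #U` families per `U`, since the number of covering
families of `U` depends only on `#U`, and there are `C(a,r)` unions of size `r`. A union has at
most `n * m` elements, which bounds the range of `r`.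
-/

open Finset

def coverCount (n m r : ℕ) : ℕ :=
  ((((Finset.range r).powersetCard m).powersetCard n).filter
    fun S => S.sup id = Finset.range r).card

namespace Finset

variable {α β : Type*} [DecidableEq α] [DecidableEq β]

def coveringFamilies (n m : ℕ) (V : Finset α) : Finset (Finset (Finset α)) :=
  ((V.powersetCard m).powersetCard n).filter fun S => S.sup id = V

theorem sup_map_mapEmbedding (e : α ↪ β) (S : Finset (Finset α)) :
    (S.map (mapEmbedding e).toEmbedding).sup id = (S.sup id).map e := by
  rw [sup_map, apply_sup_eq_sup_comp (map e) (fun _ _ => map_union _ _) (map_empty e)]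
  rfl

theorem coveringFamilies_map (n m : ℕ) (e : α ↪ β) (V : Finset α) :
    coveringFamilies n m (V.map e) =
      (coveringFamilies n m V).map (mapEmbedding (mapEmbedding e).toEmbedding).toEmbedding := by
  simp only [coveringFamilies, powersetCard_map, filter_map]
  congr 1
  refine filter_congr fun S _ => ?_
  simp only [Function.comp_apply, RelEmbedding.coe_toEmbedding, mapEmbedding_apply,
    sup_map_mapEmbedding, map_inj]

theorem card_coveringFamilies_map (n m : ℕ) (e : α ↪ β) (V : Finset α) :
    #(coveringFamilies n m (V.map e)) = #(coveringFamilies n m V) := by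
  rw [coveringFamilies_map, card_map]

theorem card_coveringFamilies_attach (n m : ℕ) (U : Finset α) :
    #(coveringFamilies n m U.attach) = #(coveringFamilies n m U) := by
  conv_rhs => rw [← attach_map_val (s := U)]
  rw [card_coveringFamilies_map]

theorem card_coveringFamilies_eq_of_card_eq {n m : ℕ} {U : Finset α} {V : Finset β}
    (h : #U = #V) : #(coveringFamilies n m U) = #(coveringFamilies n m V) := by
  let e : U ≃ V := Fintype.equivOfCardEq (by simpa using h)
  rw [← card_coveringFamilies_attach n m U, ← card_coveringFamilies_attach n m V,
    ← card_coveringFamilies_map n m e.toEmbedding, ← univ_eq_attach, map_univ_equiv,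
    univ_eq_attach]

theorem filter_sup_eq_coveringFamilies (n m : ℕ) {s U : Finset α} (hU : U ⊆ s) :
    ((s.powersetCard m).powersetCard n).filter (fun S => S.sup id = U) =
      coveringFamilies n m U := by
  ext S
  simp only [coveringFamilies, mem_filter, mem_powersetCard, and_congr_left_iff]
  rintro rfl
  refine fun _ => ⟨fun h T hT => ?_, fun h T hT => powersetCard_mono hU (h hT)⟩
  exact mem_powersetCard.2 ⟨le_sup (f := id) hT, (mem_powersetCard.1 (h hT)).2⟩

theorem card_sup_le_of_mem_powersetCard {n m : ℕ} {s : Finset α} {S : Finset (Finset α)}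
    (hS : S ∈ (s.powersetCard m).powersetCard n) : #(S.sup id) ≤ n * m := by
  rw [mem_powersetCard] at hS
  rw [sup_eq_biUnion, ← hS.2]
  exact card_biUnion_le_card_mul _ _ _ fun T hT => (mem_powersetCard.1 (hS.1 hT)).2.le

theorem sum_range_eq_sum_range_of_vanishing {M : Type*} [AddCommMonoid M] {f : ℕ → M}
    {p q : ℕ} (hp : ∀ r ≥ p, f r = 0) (hq : ∀ r ≥ q, f r = 0) :
    ∑ r ∈ range p, f r = ∑ r ∈ range q, f r := by
  wlog hpq : p ≤ q generalizing p q
  · exact (this hq hp (by omega)).symm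
  exact sum_subset (range_subset_range.2 hpq) fun r _ hr => hp r (by simpa using hr)

end Finset

theorem coverCount_eq_card_coveringFamilies {α : Type*} [DecidableEq α] (n m : ℕ)
    (U : Finset α) : coverCount n m #U = #(coveringFamilies n m U) :=
  card_coveringFamilies_eq_of_card_eq (by simp)

theorem coverCount_eq_zero_of_lt {n m r : ℕ} (h : n * m < r) : coverCount n m r = 0 := by
  rw [coverCount, card_eq_zero, filter_eq_empty_iff]
  intro S hS hsup
  have := card_sup_le_of_mem_powersetCard hS
  rw [hsup, card_range] at this
  omega

/-- For natural numbers a, n, m,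
C(C(a,m), n) = ∑_{r=0}^{nm} c(n,m,r)·C(a,r), where c(n,m,r) counts the n-element sets of
m-element subsets of an r-element set covering it. -/
theorem choose_choose_eq_sum_coverCount (a n m : ℕ) :
    (a.choose m).choose n =
      ∑ r ∈ Finset.range (n * m + 1), coverCount n m r * a.choose r := by
  set A := ((range a).powersetCard m).powersetCard n
  have union_subset : ∀ S ∈ A, S.sup id ∈ (range a).powerset := fun S hS =>
    mem_powerset.2 <| Finset.sup_le fun T hT =>
      (mem_powersetCard.1 ((mem_powersetCard.1 hS).1 hT)).1
  calc (a.choose m).choose n = #A := by simp only [A, card_powersetCard, card_range]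
    _ = ∑ U ∈ (range a).powerset, #(A.filter fun S => S.sup id = U) :=
      card_eq_sum_card_fiberwise union_subset
    _ = ∑ U ∈ (range a).powerset, coverCount n m #U := sum_congr rfl fun U hU => by
      rw [filter_sup_eq_coveringFamilies n m (mem_powerset.1 hU),
        coverCount_eq_card_coveringFamilies]
    _ = ∑ r ∈ range (a + 1), coverCount n m r * a.choose r := by
      simp only [sum_powerset_apply_card, card_range, smul_eq_mul, mul_comm]
    _ = ∑ r ∈ range (n * m + 1), coverCount n m r * a.choose r :=
      sum_range_eq_sum_range_of_vanishing
        (fun r hr => by rw [Nat.choose_eq_zero_of_lt (by omega), mul_zero])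
        (fun r hr => by rw [coverCount_eq_zero_of_lt (by omega), zero_mul])
end
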